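/- arXiv:1901.02287 — 8 statements merged into one kernel-verified Lean document; each statement's English description precedes it below -/
import Mathlib

section
/- For every n ≥ 1, every puncturing set X ⊆ {0,…,2^n−1}, every t with 0 ≤ t ≤ n, every ℓ with 0 ≤ ℓ ≤ 2^{n−t}−1, and all stages s, s' with 0 ≤ s, s' ≤ t, the number of zero-LLR indices in the block {ℓ·2^t, …, (ℓ+1)·2^t − 1} is the same at stages s and s': |Z_s(X) ∩ {ℓ·2^t, …, (ℓ+1)·2^t − 1}| = |Z_{s'}(X) ∩ {ℓ·2^t, …, (ℓ+1)·2^t − 1}|. -/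
/-! Stage `s` pairs `i` with `i ^^^ 2 ^ s`: the member with bit `s` clear is an f-node output and
its partner a g-node output, both fed by the same two stage-`s+1` entries `a, b`. Since
`[a ∨ b] + [a ∧ b] = [a] + [b]`, every pair keeps its number of zeros from stage `s + 1` to
stage `s`, and for `s < t` an aligned block of length `2 ^ t` is a union of such pairs. -/

/-- Binary domination: every binary digit of `i` is at most the corresponding digit of `j`. -/
def bdom (i j : ℕ) : Prop := ∀ t, i.testBit t = true → j.testBit t = true

instance (i j : ℕ) : Decidable (bdom i j) :=
  decidable_of_iff (i ||| j = j) (by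
    constructor
    · intro h t hi
      have h1 : (i ||| j).testBit t = j.testBit t := by rw [h]
      rw [Nat.testBit_or, hi, Bool.true_or] at h1
      exact h1.symm
    · intro h
      apply Nat.eq_of_testBit_eq
      intro t
      rw [Nat.testBit_or]
      cases hi : i.testBit t with
      | true => simp [h t hi]
      | false => simp)

/-- One step of zero-LLR propagation, computing the stage-`t` zero-LLR set from the
stage-`t+1` zero-LLR set `S`, for a polar code of length `2^n`. -/
def zstep (n t : ℕ) (S : Finset ℕ) : Finset ℕ :=
  (Finset.range (2 ^ n)).filter fun i =>
    if i.testBit t then i ∈ S ∧ i - 2 ^ t ∈ S else i ∈ S ∨ i + 2 ^ t ∈ S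

/-- Zero-LLR set at stage `t` for puncturing set `X`, for a polar code of length `2^n`:
`Zstage n X n = X` and `Zstage n X t = zstep n t (Zstage n X (t+1))` for `t < n`. -/
def Zstage (n : ℕ) (X : Finset ℕ) (t : ℕ) : Finset ℕ :=
  if _h : n ≤ t then X else zstep n t (Zstage n X (t + 1))
termination_by n - t
decreasing_by omega

/-- The incapable set resulting from puncturing set `X`. -/
def Up (n : ℕ) (X : Finset ℕ) : Finset ℕ := Zstage n X 0

theorem Finset.card_inter_eq_card_inter_of_involutive {α : Type*} [DecidableEq α]
    {B S T : Finset α} {σ : α → α} (hσ : Function.Involutive σ) (hσB : ∀ i ∈ B, σ i ∈ B)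
    (hcount : ∀ i ∈ B, (if i ∈ T then 1 else 0) + (if σ i ∈ T then 1 else 0)
      = (if i ∈ S then 1 else 0) + (if σ i ∈ S then 1 else 0)) :
    (T ∩ B).card = (S ∩ B).card := by
  have twice_card : ∀ U : Finset α, 2 * (U ∩ B).card
      = ∑ i ∈ B, ((if i ∈ U then 1 else 0) + (if σ i ∈ U then 1 else 0)) := by
    intro U
    have hswap : ∑ i ∈ B, (if σ i ∈ U then 1 else 0) = ∑ i ∈ B, (if i ∈ U then 1 else 0) :=
      Finset.sum_nbij' σ σ hσB hσB (fun i _ ↦ hσ i) (fun i _ ↦ hσ i) (fun _ _ ↦ rfl)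
    rw [Finset.sum_add_distrib, hswap, Finset.sum_boole, Finset.filter_mem_eq_inter,
      Finset.inter_comm, Nat.cast_id, two_mul]
  have := twice_card T
  rw [Finset.sum_congr rfl hcount, ← twice_card S] at this
  omega

theorem Nat.mem_Ico_mul_iff_div_eq {k : ℕ} (hk : 0 < k) (i ℓ : ℕ) :
    i ∈ Finset.Ico (ℓ * k) ((ℓ + 1) * k) ↔ i / k = ℓ := by
  rw [Finset.mem_Ico, Nat.div_eq_iff hk, add_mul, one_mul]
  omega

theorem Nat.xor_two_pow_involutive (s : ℕ) : Function.Involutive (· ^^^ 2 ^ s) :=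
  fun i ↦ xor_cancel_right i (2 ^ s)

theorem Nat.testBit_xor_two_pow_self (i s : ℕ) : (i ^^^ 2 ^ s).testBit s = !i.testBit s := by
  simp [Nat.testBit_xor]

theorem Nat.xor_two_pow_div_two_pow {s t : ℕ} (hst : s < t) (i : ℕ) :
    (i ^^^ 2 ^ s) / 2 ^ t = i / 2 ^ t := by
  apply Nat.eq_of_testBit_eq
  intro k
  have hne : s ≠ k + t := by omega
  simp [Nat.testBit_div_two_pow, Nat.testBit_xor, hne]

theorem Nat.xor_two_pow_eq (i s : ℕ) :
    i ^^^ 2 ^ s = if i.testBit s then i - 2 ^ s else i + 2 ^ s := by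
  have hi := Nat.div_add_mod i (2 ^ s)
  have hxor := Nat.div_add_mod (i ^^^ 2 ^ s) (2 ^ s)
  rw [Nat.xor_div_two_pow, Nat.xor_mod_two_pow, Nat.div_self (Nat.two_pow_pos s),
    Nat.mod_self, Nat.xor_zero] at hxor
  rw [← hxor, Nat.testBit_eq_decide_div_mod_eq]
  split_ifs with hbit
  · have hodd : Odd (i / 2 ^ s) := Nat.odd_iff.mpr (of_decide_eq_true hbit)
    rw [Nat.xor_one_of_odd hodd, Nat.mul_sub_one]
    have : 2 ^ s ≤ 2 ^ s * (i / 2 ^ s) := Nat.le_mul_of_pos_right _ hodd.pos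
    omega
  · have heven : Even (i / 2 ^ s) := by
      rw [Nat.even_iff]; simpa using hbit
    rw [Nat.xor_one_of_even heven, mul_add_one]
    omega

lemma mem_zstep_iff {n s i : ℕ} {S : Finset ℕ} :
    i ∈ zstep n s S ↔ i < 2 ^ n ∧
      if i.testBit s then i ∈ S ∧ i ^^^ 2 ^ s ∈ S else i ∈ S ∨ i ^^^ 2 ^ s ∈ S := by
  rw [zstep, Finset.mem_filter, Finset.mem_range, Nat.xor_two_pow_eq]
  split_ifs <;> rfl

lemma zstep_pair_count (n s : ℕ) (S : Finset ℕ) {i : ℕ} (hi : i < 2 ^ n)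
    (hi' : i ^^^ 2 ^ s < 2 ^ n) :
    (if i ∈ zstep n s S then 1 else 0) + (if i ^^^ 2 ^ s ∈ zstep n s S then 1 else 0)
      = (if i ∈ S then 1 else 0) + (if i ^^^ 2 ^ s ∈ S then 1 else 0) := by
  simp only [mem_zstep_iff, xor_cancel_right, Nat.testBit_xor_two_pow_self]
  cases i.testBit s <;> by_cases hS : i ∈ S <;> by_cases hS' : i ^^^ 2 ^ s ∈ S <;>
    simp [hi, hi', hS, hS']

lemma card_zstep_inter_Ico {n s t : ℕ} (hst : s < t) {ℓ : ℕ} (hℓ : (ℓ + 1) * 2 ^ t ≤ 2 ^ n)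
    (S : Finset ℕ) :
    (zstep n s S ∩ Finset.Ico (ℓ * 2 ^ t) ((ℓ + 1) * 2 ^ t)).card
      = (S ∩ Finset.Ico (ℓ * 2 ^ t) ((ℓ + 1) * 2 ^ t)).card := by
  have hlt : ∀ i ∈ Finset.Ico (ℓ * 2 ^ t) ((ℓ + 1) * 2 ^ t), i < 2 ^ n :=
    fun i hi ↦ (Finset.mem_Ico.mp hi).2.trans_le hℓ
  have hσ : ∀ i ∈ Finset.Ico (ℓ * 2 ^ t) ((ℓ + 1) * 2 ^ t),
      i ^^^ 2 ^ s ∈ Finset.Ico (ℓ * 2 ^ t) ((ℓ + 1) * 2 ^ t) := by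
    intro i hi
    rw [Nat.mem_Ico_mul_iff_div_eq (Nat.two_pow_pos t)] at hi ⊢
    rwa [Nat.xor_two_pow_div_two_pow hst]
  exact Finset.card_inter_eq_card_inter_of_involutive (Nat.xor_two_pow_involutive s) hσ
    fun i hi ↦ zstep_pair_count n s S (hlt i hi) (hlt _ (hσ i hi))

lemma Zstage_of_lt {n t : ℕ} (X : Finset ℕ) (h : t < n) :
    Zstage n X t = zstep n t (Zstage n X (t + 1)) := by
  rw [Zstage, dif_neg (not_le.mpr h)]

lemma card_Zstage_inter_Ico {n s t : ℕ} (hst : s ≤ t) (ht : t ≤ n) {ℓ : ℕ}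
    (hℓ : (ℓ + 1) * 2 ^ t ≤ 2 ^ n) (X : Finset ℕ) :
    (Zstage n X s ∩ Finset.Ico (ℓ * 2 ^ t) ((ℓ + 1) * 2 ^ t)).card
      = (Zstage n X t ∩ Finset.Ico (ℓ * 2 ^ t) ((ℓ + 1) * 2 ^ t)).card := by
  induction hst using Nat.decreasingInduction with
  | self => rfl
  | of_succ k hk ih =>
    rw [Zstage_of_lt X (hk.trans_le ht), card_zstep_inter_Ico hk hℓ, ih]

theorem block_zero_count_invariant_general (n : ℕ)
    (X : Finset ℕ)
    (t : ℕ) (ht : t ≤ n) (ℓ : ℕ) (hℓ : ℓ ≤ 2 ^ (n - t) - 1)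
    (s s' : ℕ) (hs : s ≤ t) (hs' : s' ≤ t) :
    (Zstage n X s ∩ Finset.Ico (ℓ * 2 ^ t) ((ℓ + 1) * 2 ^ t)).card
      = (Zstage n X s' ∩ Finset.Ico (ℓ * 2 ^ t) ((ℓ + 1) * 2 ^ t)).card := by
  have hblock : (ℓ + 1) * 2 ^ t ≤ 2 ^ n := by
    calc (ℓ + 1) * 2 ^ t ≤ 2 ^ (n - t) * 2 ^ t :=
          Nat.mul_le_mul_right _ (by have := Nat.one_le_two_pow (n := n - t); omega)
      _ = 2 ^ n := by rw [← pow_add, Nat.sub_add_cancel ht]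
  rw [card_Zstage_inter_Ico hs ht hblock, card_Zstage_inter_Ico hs' ht hblock]

/-- within any aligned block of size `2^t`, the number of zero-LLR
indices is the same at all stages `s, s' ≤ t`. -/
theorem block_zero_count_invariant (n : ℕ) (hn : 1 ≤ n)
    (X : Finset ℕ) (hX : X ⊆ Finset.range (2 ^ n))
    (t : ℕ) (ht : t ≤ n) (ℓ : ℕ) (hℓ : ℓ ≤ 2 ^ (n - t) - 1)
    (s s' : ℕ) (hs : s ≤ t) (hs' : s' ≤ t) :
    (Zstage n X s ∩ Finset.Ico (ℓ * 2 ^ t) ((ℓ + 1) * 2 ^ t)).card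
      = (Zstage n X s' ∩ Finset.Ico (ℓ * 2 ^ t) ((ℓ + 1) * 2 ^ t)).card :=
  block_zero_count_invariant_general n X t ht ℓ hℓ s s' hs hs'
end

section
/- For every n ≥ 1, every puncturing set X ⊆ {0,…,2^n−1}, and every stage t with 0 ≤ t ≤ n, the zero-LLR set at stage t has the same cardinality as the puncturing set: |Z_t(X)| = |X|. In particular, the incapable set satisfies |U_p(X)| = |X|, i.e., puncturing J encoder output bits makes exactly J encoder input bits incapable, regardless of the puncturing bit pattern. -/
/-!
Fix `t` and pair each index `j` with bit `t` clear with its partner `j + 2^t`. One propagation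
step replaces the membership pair `(a, b)` of `j, j + 2^t` in `S` by `(a ∨ b, a ∧ b)`, which has
the same number of `true`s. Globally: if `A` is the set of such `j` in `S` and `B` the set of such
`j` with `j + 2^t ∈ S`, then `|S| = |A| + |B|`, and the image of `S` under the step splits in the
same way into `A ∪ B` and `A ∩ B`, while `|A ∪ B| + |A ∩ B| = |A| + |B|`.
-/

namespace Nat

theorem testBit_add_two_pow_of_testBit_eq_false {i t : ℕ} (h : i.testBit t = false) :
    (i + 2 ^ t).testBit t = true := by
  rw [Nat.add_comm, testBit_two_pow_add_eq, h, Bool.not_false]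

theorem testBit_sub_two_pow_of_testBit_eq_true {i t : ℕ} (h : i.testBit t = true) :
    (i - 2 ^ t).testBit t = false := by
  have hi : i = 2 ^ t + (i - 2 ^ t) := by have := ge_two_pow_of_testBit h; omega
  rw [hi, testBit_two_pow_add_eq, Bool.not_eq_true'] at h
  exact h

end Nat

def lowerPart (t : ℕ) (T : Finset ℕ) : Finset ℕ :=
  T.filter fun i => i.testBit t = false

def upperPart (t : ℕ) (T : Finset ℕ) : Finset ℕ :=
  (T.filter fun i => i.testBit t = true).image (· - 2 ^ t)

theorem mem_lowerPart {t j : ℕ} {T : Finset ℕ} :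
    j ∈ lowerPart t T ↔ j.testBit t = false ∧ j ∈ T := by
  rw [lowerPart, Finset.mem_filter, and_comm]

theorem mem_upperPart {t j : ℕ} {T : Finset ℕ} :
    j ∈ upperPart t T ↔ j.testBit t = false ∧ j + 2 ^ t ∈ T := by
  simp only [upperPart, Finset.mem_image, Finset.mem_filter]
  constructor
  · rintro ⟨i, ⟨hiT, hit⟩, rfl⟩
    have := Nat.ge_two_pow_of_testBit hit
    exact ⟨Nat.testBit_sub_two_pow_of_testBit_eq_true hit, by rwa [Nat.sub_add_cancel this]⟩
  · rintro ⟨hjt, hjT⟩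
    exact ⟨j + 2 ^ t, ⟨hjT, Nat.testBit_add_two_pow_of_testBit_eq_false hjt⟩, Nat.add_sub_cancel j _⟩

theorem card_lowerPart_add_card_upperPart (t : ℕ) (T : Finset ℕ) :
    (lowerPart t T).card + (upperPart t T).card = T.card := by
  have hinj : Set.InjOn (· - 2 ^ t) ↑(T.filter fun i => i.testBit t = true) := by
    intro a ha b hb hab
    simp only [Finset.coe_filter, Set.mem_ofPred_eq] at ha hb
    have := Nat.ge_two_pow_of_testBit ha.2
    have := Nat.ge_two_pow_of_testBit hb.2
    simp only at hab
    omega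
  rw [upperPart, Finset.card_image_of_injOn hinj, add_comm, lowerPart]
  simpa only [Bool.not_eq_true] using Finset.card_filter_add_card_filter_not (s := T) (fun i => i.testBit t = true)

section zstep

variable {n t : ℕ} {S : Finset ℕ}

theorem mem_zstep {i : ℕ} :
    i ∈ zstep n t S ↔ i < 2 ^ n ∧
      if i.testBit t then i ∈ S ∧ i - 2 ^ t ∈ S else i ∈ S ∨ i + 2 ^ t ∈ S := by
  rw [zstep, Finset.mem_filter, Finset.mem_range]

theorem lowerPart_zstep (hS : S ⊆ Finset.range (2 ^ n)) :
    lowerPart t (zstep n t S) = lowerPart t S ∪ upperPart t S := by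
  ext j
  have hlt : j ∈ S ∨ j + 2 ^ t ∈ S → j < 2 ^ n := by
    rintro (h | h)
    · exact Finset.mem_range.1 (hS h)
    · exact (Nat.le_add_right j _).trans_lt (Finset.mem_range.1 (hS h))
  simp only [Finset.mem_union, mem_lowerPart, mem_upperPart, mem_zstep]
  constructor
  · rintro ⟨hjt, -, h⟩
    simp only [hjt, Bool.false_eq_true, if_false] at h
    tauto
  · rintro (⟨hjt, h⟩ | ⟨hjt, h⟩)
    · simp only [hjt, Bool.false_eq_true, if_false, hlt (.inl h), h, true_or, and_self]
    · simp only [hjt, Bool.false_eq_true, if_false, hlt (.inr h), h, or_true, and_self]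

theorem upperPart_zstep (hS : S ⊆ Finset.range (2 ^ n)) :
    upperPart t (zstep n t S) = lowerPart t S ∩ upperPart t S := by
  ext j
  simp only [Finset.mem_inter, mem_lowerPart, mem_upperPart, mem_zstep]
  constructor
  · rintro ⟨hjt, -, h⟩
    simp only [Nat.testBit_add_two_pow_of_testBit_eq_false hjt, if_true, Nat.add_sub_cancel] at h
    exact ⟨⟨hjt, h.2⟩, hjt, h.1⟩
  · rintro ⟨⟨hjt, hjS⟩, -, hjS'⟩
    simp only [Nat.testBit_add_two_pow_of_testBit_eq_false hjt, if_true, Nat.add_sub_cancel]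
    exact ⟨hjt, Finset.mem_range.1 (hS hjS'), hjS', hjS⟩

theorem card_zstep (hS : S ⊆ Finset.range (2 ^ n)) : (zstep n t S).card = S.card := by
  rw [← card_lowerPart_add_card_upperPart t (zstep n t S), lowerPart_zstep hS, upperPart_zstep hS,
    Finset.card_union_add_card_inter, card_lowerPart_add_card_upperPart]

theorem zstep_subset_range : zstep n t S ⊆ Finset.range (2 ^ n) :=
  Finset.filter_subset _ _

end zstep

section Zstage

variable {n : ℕ} {X : Finset ℕ}

theorem Zstage_subset_range (hX : X ⊆ Finset.range (2 ^ n)) (t : ℕ) :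
    Zstage n X t ⊆ Finset.range (2 ^ n) := by
  rw [Zstage]
  split
  · exact hX
  · exact zstep_subset_range

theorem card_Zstage (hX : X ⊆ Finset.range (2 ^ n)) (t : ℕ) : (Zstage n X t).card = X.card := by
  rw [Zstage]
  split
  · rfl
  · rw [card_zstep (Zstage_subset_range hX _), card_Zstage hX (t + 1)]
termination_by n - t

end Zstage

theorem zero_llr_card_eq_punct_card_general (n : ℕ)
    (X : Finset ℕ) (hX : X ⊆ Finset.range (2 ^ n)) :
    (∀ t ≤ n, (Zstage n X t).card = X.card) ∧ (Up n X).card = X.card :=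
  ⟨fun t _ => card_Zstage hX t, card_Zstage hX 0⟩

/-- the zero-LLR set at every stage `t ≤ n` has the same cardinality
as the puncturing set; in particular `|U_p(X)| = |X|`. -/
theorem zero_llr_card_eq_punct_card (n : ℕ) (hn : 1 ≤ n)
    (X : Finset ℕ) (hX : X ⊆ Finset.range (2 ^ n)) :
    (∀ t ≤ n, (Zstage n X t).card = X.card) ∧ (Up n X).card = X.card :=
  zero_llr_card_eq_punct_card_general n X hX
end

section
/- For every n ≥ 1, every stage t with 0 ≤ t ≤ n, every index i with 0 ≤ i < 2^t, and every puncturing set X ⊆ {0,…,2^n−1} with i ∉ Z_t(X), there exists a single index k with 0 ≤ k < 2^n and k ∉ X such that i ∈ Z_t(X ∪ {k}). That is, regardless of how the polar code is currently punctured, any variable node at stage t with index below 2^t whose LLR is nonzero can be made to have zero LLR by puncturing one additional encoder output bit. -/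
/-!
It suffices to puncture `i` itself. Since `i < 2 ^ t`, the binary digits of `i` at positions
`t, …, n - 1` are all `0`, so at each of these stages membership of `i` propagates through the
`or` branch of the update rule, from `X ∪ {i}` at stage `n` down to stage `t`.
-/

lemma Zstage_of_le {n t : ℕ} (X : Finset ℕ) (h : n ≤ t) : Zstage n X t = X := by
  rw [Zstage, dif_pos h]

lemma mem_zstep_of_mem {n t i : ℕ} {S : Finset ℕ} (hi : i < 2 ^ n)
    (hbit : i.testBit t = false) (hS : i ∈ S) : i ∈ zstep n t S := by
  simp [zstep, hi, hbit, hS]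

lemma mem_Zstage_of_mem {n t i : ℕ} {X : Finset ℕ} (ht : t ≤ n) (hi : i < 2 ^ t)
    (hX : i ∈ X) : i ∈ Zstage n X t := by
  induction ht using Nat.decreasingInduction with
  | self => rwa [Zstage_of_le X le_rfl]
  | of_succ t htn ih =>
    rw [Zstage_of_lt X htn]
    have hi' : i < 2 ^ (t + 1) := hi.trans (Nat.pow_lt_pow_succ one_lt_two)
    exact mem_zstep_of_mem (hi.trans_le (Nat.pow_le_pow_right two_pos htn.le))
      (Nat.testBit_lt_two_pow hi) (ih hi')

theorem single_extra_puncture_suffices_general (n : ℕ)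
    (t : ℕ) (ht : t ≤ n) (i : ℕ) (hi : i < 2 ^ t)
    (X : Finset ℕ) (hiZ : i ∉ Zstage n X t) :
    ∃ k, k < 2 ^ n ∧ k ∉ X ∧ i ∈ Zstage n (insert k X) t :=
  ⟨i, hi.trans_le (Nat.pow_le_pow_right two_pos ht),
    fun hiX => hiZ (mem_Zstage_of_mem ht hi hiX),
    mem_Zstage_of_mem ht hi (Finset.mem_insert_self i X)⟩

/-- any stage-`t` variable node with index `i < 2^t` and nonzero LLR can be
made to have zero LLR by puncturing a single additional encoder output bit. -/
theorem single_extra_puncture_suffices (n : ℕ) (hn : 1 ≤ n)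
    (t : ℕ) (ht : t ≤ n) (i : ℕ) (hi : i < 2 ^ t)
    (X : Finset ℕ) (hX : X ⊆ Finset.range (2 ^ n)) (hiZ : i ∉ Zstage n X t) :
    ∃ k, k < 2 ^ n ∧ k ∉ X ∧ i ∈ Zstage n (insert k X) t :=
  single_extra_puncture_suffices_general n t ht i hi X hiZ
end

section
/- For every n ≥ 1 and every puncturing set X ⊆ {0,…,2^n−1} that is downward closed under binary domination (j ∈ X and i ⪯ j imply i ∈ X), the puncturing pattern is identical to the resulting incapable bit pattern: U_p(X) = X. -/
namespace Nat

theorem add_two_pow_eq_or_of_testBit_eq_false {i t : ℕ} (h : i.testBit t = false) :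
    i + 2 ^ t = i ||| 2 ^ t := by
  have hlow : i % 2 ^ (t + 1) < 2 ^ t := by
    by_contra! hge
    have hbit := testBit_of_two_pow_le_and_two_pow_add_one_gt hge (mod_lt _ (Nat.two_pow_pos _))
    simp [h] at hbit
  have hdecomp := div_add_mod i (2 ^ (t + 1))
  have hlow' : i % 2 ^ (t + 1) + 2 ^ t < 2 ^ (t + 1) := by
    have := Nat.pow_succ 2 t
    omega
  calc i + 2 ^ t = 2 ^ (t + 1) * (i / 2 ^ (t + 1)) + (i % 2 ^ (t + 1) + 2 ^ t) := by omega
    _ = 2 ^ (t + 1) * (i / 2 ^ (t + 1)) ||| (i % 2 ^ (t + 1) ||| 2 ^ t) := by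
      rw [two_pow_add_eq_or_of_lt hlow', or_two_pow_eq_add_of_lt hlow]
    _ = i ||| 2 ^ t := by
      rw [← Nat.or_assoc, ← two_pow_add_eq_or_of_lt (mod_lt _ (Nat.two_pow_pos _)), hdecomp]

theorem xor_two_pow_add_two_pow_of_testBit {i t : ℕ} (h : i.testBit t = true) :
    (i ^^^ 2 ^ t) + 2 ^ t = i := by
  rw [add_two_pow_eq_or_of_testBit_eq_false (by simp [h, testBit_two_pow_self])]
  apply eq_of_testBit_eq
  intro s
  by_cases hs : t = s
  · subst hs; simp [h, testBit_two_pow_self]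
  · simp [testBit_two_pow_of_ne hs]

end Nat

theorem bdom_or_right (i k : ℕ) : bdom i (i ||| k) := by
  intro s hs
  simp [Nat.testBit_or, hs]

theorem bdom_xor_of_bdom {i k : ℕ} (h : bdom k i) : bdom (i ^^^ k) i := by
  intro s hs
  rw [Nat.testBit_xor] at hs
  cases hk : k.testBit s
  · simpa [hk] using hs
  · exact h s hk

theorem bdom_add_two_pow {i t : ℕ} (h : i.testBit t = false) : bdom i (i + 2 ^ t) := by
  rw [Nat.add_two_pow_eq_or_of_testBit_eq_false h]
  exact bdom_or_right i _

theorem bdom_sub_two_pow {i t : ℕ} (h : i.testBit t = true) : bdom (i - 2 ^ t) i := by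
  have hsub : i - 2 ^ t = i ^^^ 2 ^ t := by
    have := Nat.xor_two_pow_add_two_pow_of_testBit h
    omega
  rw [hsub]
  refine bdom_xor_of_bdom fun s hs => ?_
  rw [Nat.testBit_two_pow, decide_eq_true_eq] at hs
  exact hs ▸ h

theorem zstep_eq_self {n t : ℕ} {X : Finset ℕ} (hX : X ⊆ Finset.range (2 ^ n))
    (hdc : ∀ j ∈ X, ∀ i, bdom i j → i ∈ X) : zstep n t X = X := by
  ext i
  simp only [zstep, Finset.mem_filter, Finset.mem_range]
  cases hb : i.testBit t
  · simp only [Bool.false_eq_true, if_false]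
    exact ⟨fun ⟨_, hmem⟩ => hmem.elim id fun hadd => hdc _ hadd i (bdom_add_two_pow hb),
      fun hi => ⟨Finset.mem_range.mp (hX hi), Or.inl hi⟩⟩
  · simp only [if_true]
    exact ⟨fun hmem => hmem.2.1,
      fun hi => ⟨Finset.mem_range.mp (hX hi), hi, hdc _ hi _ (bdom_sub_two_pow hb)⟩⟩

theorem Zstage_eq_self_of_forall_zstep_eq {n : ℕ} {X : Finset ℕ}
    (h : ∀ t, zstep n t X = X) (t : ℕ) : Zstage n X t = X := by
  rw [Zstage]
  split_ifs
  · rfl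
  · rw [Zstage_eq_self_of_forall_zstep_eq h (t + 1), h]
termination_by n - t

theorem identical_puncturing_pattern_general (n : ℕ)
    (X : Finset ℕ) (hX : X ⊆ Finset.range (2 ^ n))
    (hdc : ∀ j ∈ X, ∀ i, bdom i j → i ∈ X) :
    Up n X = X :=
  Zstage_eq_self_of_forall_zstep_eq (fun _ => zstep_eq_self hX hdc) 0

/-- a puncturing set that is downward closed under binary domination
is an identical puncturing bit pattern: `U_p(X) = X`. -/
theorem identical_puncturing_pattern (n : ℕ) (hn : 1 ≤ n)
    (X : Finset ℕ) (hX : X ⊆ Finset.range (2 ^ n))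
    (hdc : ∀ j ∈ X, ∀ i, bdom i j → i ∈ X) :
    Up n X = X :=
  identical_puncturing_pattern_general n X hX hdc
end

section
/- For every n ≥ 1 and every puncturing set X ⊆ {0,…,2^n−1} that is upward closed under binary domination (j ∈ X, j ⪯ k, and k < 2^n imply k ∈ X), the zero-LLR set at each stage t with 0 ≤ t ≤ n is obtained by flipping the binary digits t, t+1, …, n−1 of each element of X: Z_t(X) = {x XOR (2^n − 2^t) : x ∈ X}, where XOR denotes bitwise exclusive-or of natural numbers. -/
/-!
Downward induction on `t`. The mask `2 ^ n - 2 ^ t` is `(2 ^ n - 2 ^ (t + 1)) ^^^ 2 ^ t`, and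
`i ± 2 ^ t = i ^^^ 2 ^ t` in the branch of `zstep` where it occurs. So with `y = i ^^^ (2 ^ n - 2 ^ t)`,
the step at index `i` asks for `y ^^^ 2 ^ t` and `y` to lie in `X` (digit `t` of `i` set) or for one
of them to lie in `X` (digit unset). Of these two indices, the one with digit `t` set dominates the
other, so by upward closure both conditions reduce to `y ∈ X`.
-/

def UpwardClosed (n : ℕ) (X : Finset ℕ) : Prop :=
  ∀ j ∈ X, ∀ k, k < 2 ^ n → bdom j k → k ∈ X

lemma Nat.xor_two_pow_of_testBit_eq_false {x t : ℕ} (h : x.testBit t = false) :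
    x ^^^ 2 ^ t = x + 2 ^ t := by
  have heven : Even (x / 2 ^ t) := by
    rw [Nat.even_iff, Nat.mod_two_eq_zero_iff_testBit_zero, Nat.testBit_div_two_pow, zero_add, h]
  rw [← Nat.div_add_mod (x ^^^ 2 ^ t) (2 ^ t), Nat.xor_div_two_pow, Nat.xor_mod_two_pow,
    Nat.div_self (Nat.two_pow_pos t), Nat.mod_self, Nat.xor_zero, Nat.xor_one_of_even heven]
  conv_rhs => rw [← Nat.div_add_mod x (2 ^ t)]
  ring

lemma Nat.xor_two_pow_of_testBit_eq_true {x t : ℕ} (h : x.testBit t = true) :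
    x ^^^ 2 ^ t = x - 2 ^ t := by
  have h' : (x ^^^ 2 ^ t).testBit t = false := by simp [h]
  have := Nat.xor_two_pow_of_testBit_eq_false h'
  rw [Nat.xor_xor_cancel_right] at this
  omega

lemma Nat.testBit_two_pow_sub_two_pow_succ_self {n t : ℕ} (ht : t < n) :
    (2 ^ n - 2 ^ (t + 1)).testBit t = false := by
  obtain ⟨k, rfl⟩ := Nat.exists_eq_add_of_le ht
  rw [pow_add 2 (t + 1) k, ← Nat.mul_sub_one, Nat.testBit_two_pow_mul]
  simp

lemma bdom_xor_two_pow {y t : ℕ} (h : y.testBit t = true) : bdom (y ^^^ 2 ^ t) y := by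
  intro s hs
  by_cases hst : s = t
  · exact hst ▸ h
  · simpa [Nat.testBit_two_pow_of_ne (Ne.symm hst)] using hs

lemma UpwardClosed.mem_of_xor_two_pow_mem {n t y : ℕ} {X : Finset ℕ} (huc : UpwardClosed n X)
    (hy : y < 2 ^ n) (hyt : y.testBit t = true) (h : y ^^^ 2 ^ t ∈ X) : y ∈ X :=
  huc _ h y hy (bdom_xor_two_pow hyt)

lemma mem_image_xor_iff {S : Finset ℕ} {m i : ℕ} : i ∈ S.image (· ^^^ m) ↔ i ^^^ m ∈ S :=
  ⟨fun h => by
    obtain ⟨x, hx, rfl⟩ := Finset.mem_image.mp h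
    rwa [Nat.xor_xor_cancel_right],
   fun h => Finset.mem_image.mpr ⟨i ^^^ m, h, Nat.xor_xor_cancel_right i m⟩⟩

theorem zstep_image_xor {n t m : ℕ} {X : Finset ℕ} (hX : X ⊆ Finset.range (2 ^ n))
    (huc : UpwardClosed n X) (hm : m < 2 ^ n) (ht : t < n) (hmt : m.testBit t = false) :
    zstep n t (X.image (· ^^^ m)) = X.image (· ^^^ (m ^^^ 2 ^ t)) := by
  have h2t : 2 ^ t < 2 ^ n := Nat.pow_lt_pow_right (by norm_num) ht
  have hmask : m ^^^ 2 ^ t < 2 ^ n := Nat.xor_lt_two_pow hm h2t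
  have hlt {x : ℕ} (hx : x ∈ X) : x < 2 ^ n := Finset.mem_range.mp (hX hx)
  ext i
  set y := i ^^^ (m ^^^ 2 ^ t) with hy
  have hyt : y.testBit t = !i.testBit t := by simp [hy, hmt]
  have hflip : i ^^^ m = y ^^^ 2 ^ t := by rw [hy, ← Nat.xor_assoc, Nat.xor_xor_cancel_right]
  have hneighbour : (i ^^^ 2 ^ t) ^^^ m = y := by rw [hy]; ac_rfl
  have hi_lt (hyX : y ∈ X) : i < 2 ^ n :=
    Nat.xor_xor_cancel_right i _ ▸ Nat.xor_lt_two_pow (hlt hyX) hmask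
  simp only [zstep, Finset.mem_filter, Finset.mem_range, mem_image_xor_iff, hflip]
  cases hit : i.testBit t
  · rw [hit] at hyt
    rw [if_neg (by simp), ← Nat.xor_two_pow_of_testBit_eq_false hit, hneighbour]
    constructor
    · rintro ⟨hi, hflipped | hyX⟩
      · exact huc.mem_of_xor_two_pow_mem (Nat.xor_lt_two_pow hi hmask) hyt hflipped
      · exact hyX
    · exact fun hyX => ⟨hi_lt hyX, Or.inr hyX⟩
  · rw [hit] at hyt
    rw [if_pos rfl, ← Nat.xor_two_pow_of_testBit_eq_true hit, hneighbour]
    refine ⟨fun h => h.2.2, fun hyX => ⟨hi_lt hyX, ?_, hyX⟩⟩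
    refine huc.mem_of_xor_two_pow_mem (t := t) (Nat.xor_lt_two_pow (hlt hyX) h2t) (by simp [hyt]) ?_
    rwa [Nat.xor_xor_cancel_right]

theorem upward_closed_stage_sets_general (n : ℕ)
    (X : Finset ℕ) (hX : X ⊆ Finset.range (2 ^ n))
    (huc : ∀ j ∈ X, ∀ k, k < 2 ^ n → bdom j k → k ∈ X)
    (t : ℕ) :
    Zstage n X t = X.image fun x => x ^^^ (2 ^ n - 2 ^ t) := by
  induction t using Zstage.induct n with
  | case1 t hnt =>
    rw [Zstage, dif_pos hnt, Nat.sub_eq_zero_of_le (Nat.pow_le_pow_right two_pos hnt)]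
    simp
  | case2 t hnt ih =>
    have htn : t < n := not_le.mp hnt
    have hbit := Nat.testBit_two_pow_sub_two_pow_succ_self htn
    have hmask : 2 ^ n - 2 ^ (t + 1) + 2 ^ t = 2 ^ n - 2 ^ t := by
      have := Nat.pow_le_pow_right two_pos htn
      rw [pow_succ] at this ⊢
      omega
    rw [Zstage, dif_neg hnt, ih, zstep_image_xor hX huc (Nat.sub_lt (by positivity) (by positivity))
      htn hbit, Nat.xor_two_pow_of_testBit_eq_false hbit, hmask]

/-- for an upward-closed puncturing set, the zero-LLR set at stage
`t ≤ n` is obtained by flipping binary digits `t, …, n−1` of each element of `X`. -/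
theorem upward_closed_stage_sets (n : ℕ) (hn : 1 ≤ n)
    (X : Finset ℕ) (hX : X ⊆ Finset.range (2 ^ n))
    (huc : ∀ j ∈ X, ∀ k, k < 2 ^ n → bdom j k → k ∈ X)
    (t : ℕ) (ht : t ≤ n) :
    Zstage n X t = X.image fun x => x ^^^ (2 ^ n - 2 ^ t) :=
  upward_closed_stage_sets_general n X hX huc t
end

section
/- For every n ≥ 0, every shortening set U ⊆ {0,…,2^n−1}, and every j < 2^n: the encoder output bit j is fixed to zero by shortening the bits in U, i.e. j ∈ X_s(U), if and only if the dominating set of j is contained in U, i.e. G_j = {i < 2^n : j ⪯ i} ⊆ U. -/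
/-- Polar encoder `u ↦ u · F₂^{⊗n}` over GF(2), with `F₂ = [[1,0],[1,1]]`:
`enc 0 u = u`, and `enc (n+1) u` is the concatenation of `enc n (u_L + u_H)`
(on indices `< 2^n`) followed by `enc n u_H` (on indices `2^n, …, 2^(n+1)-1`). -/
def enc : ℕ → (ℕ → ZMod 2) → (ℕ → ZMod 2)
  | 0, u => u
  | n + 1, u => fun j =>
      if j < 2 ^ n then enc n (fun i => u i + u (i + 2 ^ n)) j
      else enc n (fun i => u (i + 2 ^ n)) (j - 2 ^ n)

/-- The fixed bit pattern at the encoder output resulting from shortening the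
encoder input bits with indices in `U`. -/
def Xs (n : ℕ) (U : Set ℕ) : Set ℕ :=
  {j | j < 2 ^ n ∧ ∀ u : ℕ → ZMod 2, (∀ i ∈ U, u i = 0) → enc n u j = 0}

/-! Splitting off the top bit, a low output index `j < 2^n` of `enc (n+1)` sees both halves of the
input while a high one `j + 2^n` sees only the high half; matching this with the top bit of `i` in
`j ⪯ i` shows that output bit `j` is the sum of the inputs `u i` over the dominating set of `j`.
So shortening all of that set forces bit `j` to zero, and otherwise the unit input at an
unshortened dominating index makes bit `j` equal to one. -/

lemma testBit_add_two_pow {x n : ℕ} (hx : x < 2 ^ n) (t : ℕ) :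
    (x + 2 ^ n).testBit t = (x.testBit t || decide (n = t)) := by
  rw [← Nat.or_two_pow_eq_add_of_lt hx, Nat.testBit_or, Nat.testBit_two_pow]

lemma lt_of_testBit_of_lt_two_pow {x n t : ℕ} (hx : x < 2 ^ n) (ht : x.testBit t = true) :
    t < n :=
  (Nat.pow_lt_pow_iff_right (by norm_num)).mp ((Nat.ge_two_pow_of_testBit ht).trans_lt hx)

section bdom

variable {n i j : ℕ}

lemma bdom_add_two_pow_right_iff (hj : j < 2 ^ n) (hi : i < 2 ^ n) :
    bdom j (i + 2 ^ n) ↔ bdom j i := by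
  refine forall_congr' fun t => imp_congr_right fun hjt => ?_
  have : n ≠ t := (lt_of_testBit_of_lt_two_pow hj hjt).ne'
  simp [testBit_add_two_pow hi, this]

lemma bdom_add_two_pow_iff (hj : j < 2 ^ n) (hi : i < 2 ^ n) :
    bdom (j + 2 ^ n) (i + 2 ^ n) ↔ bdom j i := by
  refine forall_congr' fun t => ?_
  rcases eq_or_ne n t with rfl | ht
  · simp [testBit_add_two_pow hj, testBit_add_two_pow hi, Nat.testBit_lt_two_pow hj]
  · simp [testBit_add_two_pow hj, testBit_add_two_pow hi, ht]

lemma not_bdom_add_two_pow_left (hj : j < 2 ^ n) (hi : i < 2 ^ n) : ¬ bdom (j + 2 ^ n) i := by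
  intro h
  have := h n (by simp [testBit_add_two_pow hj])
  simp [Nat.testBit_lt_two_pow hi] at this

end bdom

lemma sum_range_two_pow_succ {M : Type*} [AddCommMonoid M] (n : ℕ) (f : ℕ → M) :
    ∑ i ∈ Finset.range (2 ^ (n + 1)), f i =
      ∑ i ∈ Finset.range (2 ^ n), f i + ∑ i ∈ Finset.range (2 ^ n), f (i + 2 ^ n) := by
  simp_rw [pow_succ, mul_two, Finset.sum_range_add, add_comm (2 ^ n)]

lemma enc_succ_apply_of_lt (n : ℕ) (u : ℕ → ZMod 2) {j : ℕ} (hj : j < 2 ^ n) :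
    enc (n + 1) u j = enc n (fun i => u i + u (i + 2 ^ n)) j :=
  if_pos hj

lemma enc_succ_apply_add_two_pow (n : ℕ) (u : ℕ → ZMod 2) (j : ℕ) :
    enc (n + 1) u (j + 2 ^ n) = enc n (fun i => u (i + 2 ^ n)) j := by
  simp [enc]

theorem enc_apply_eq_sum_bdom (n : ℕ) (u : ℕ → ZMod 2) {j : ℕ} (hj : j < 2 ^ n) :
    enc n u j = ∑ i ∈ (Finset.range (2 ^ n)).filter (bdom j), u i := by
  rw [Finset.sum_filter]
  induction n generalizing u j with
  | zero =>
    obtain rfl : j = 0 := by simpa using hj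
    simp [enc, bdom]
  | succ n ih =>
    rw [sum_range_two_pow_succ]
    by_cases hlow : j < 2 ^ n
    · rw [enc_succ_apply_of_lt n u hlow, ih _ hlow, ← Finset.sum_add_distrib]
      refine Finset.sum_congr rfl fun i hi => ?_
      simp only [bdom_add_two_pow_right_iff hlow (Finset.mem_range.mp hi)]
      split_ifs <;> simp
    · obtain ⟨k, hk, rfl⟩ : ∃ k < 2 ^ n, j = k + 2 ^ n :=
        ⟨j - 2 ^ n, by rw [pow_succ] at hj; omega, by omega⟩
      have hlow_zero :
          ∀ i ∈ Finset.range (2 ^ n), (if bdom (k + 2 ^ n) i then u i else 0) = 0 :=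
        fun i hi => if_neg (not_bdom_add_two_pow_left hk (Finset.mem_range.mp hi))
      rw [enc_succ_apply_add_two_pow, ih _ hk, Finset.sum_eq_zero hlow_zero, zero_add]
      refine Finset.sum_congr rfl fun i hi => ?_
      simp only [bdom_add_two_pow_iff hk (Finset.mem_range.mp hi)]

theorem fixed_iff_dominating_subset_general (n : ℕ) (U : Set ℕ) (j : ℕ) (hj : j < 2 ^ n) :
    j ∈ Xs n U ↔ ∀ i, i < 2 ^ n → bdom j i → i ∈ U := by
  constructor
  · rintro ⟨-, hfixed⟩ i hi hji
    by_contra hiU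
    have hsingle := hfixed (Pi.single i 1) fun k hk =>
      Pi.single_eq_of_ne (ne_of_mem_of_not_mem hk hiU) 1
    simp [enc_apply_eq_sum_bdom n _ hj, Finset.sum_pi_single', hi, hji] at hsingle
  · refine fun hG => ⟨hj, fun u hu => ?_⟩
    rw [enc_apply_eq_sum_bdom n u hj]
    refine Finset.sum_eq_zero fun i hi => ?_
    obtain ⟨hi, hji⟩ := Finset.mem_filter.mp hi
    exact hu i (hG i (Finset.mem_range.mp hi) hji)

/-- output bit `j` is fixed to zero by shortening the bits in `U` iff
the dominating set `G_j = {i < 2^n : j ⪯ i}` is contained in `U`. -/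
theorem fixed_iff_dominating_subset (n : ℕ) (U : Set ℕ) (hU : ∀ i ∈ U, i < 2 ^ n)
    (j : ℕ) (hj : j < 2 ^ n) :
    j ∈ Xs n U ↔ ∀ i, i < 2 ^ n → bdom j i → i ∈ U :=
  fixed_iff_dominating_subset_general n U j hj
end

section
/- For every n ≥ 0 and every shortening set U ⊆ {0,…,2^n−1}, the fixed bit pattern X_s(U) is upward closed under binary domination: if j ∈ X_s(U) then G_j = {k < 2^n : j ⪯ k} ⊆ X_s(U). -/
theorem bdom_trans {i j k : ℕ} (hij : bdom i j) (hjk : bdom j k) : bdom i k :=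
  fun t ht => hjk t (hij t ht)

theorem bdom.le {i j : ℕ} (h : bdom i j) : i ≤ j := by
  have hand : i &&& j = i := Nat.eq_of_testBit_eq fun t => by
    rw [Nat.testBit_and]
    cases hi : i.testBit t <;> simp [h t, hi]
  exact hand ▸ Nat.and_le_right

namespace Nat

theorem ne_of_testBit_of_lt_two_pow {a n t : ℕ} (ha : a < 2 ^ n) (hat : a.testBit t = true) :
    n ≠ t := by
  rintro rfl
  simp [testBit_lt_two_pow ha] at hat

theorem testBit_add_two_pow_of_lt {a n : ℕ} (ha : a < 2 ^ n) (t : ℕ) :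
    (a + 2 ^ n).testBit t = (decide (n = t) || a.testBit t) := by
  rw [add_comm, ← mul_one (2 ^ n), two_pow_add_eq_or_of_lt ha, mul_one, testBit_or,
    testBit_two_pow]

end Nat

section bdom

variable {n a b : ℕ}

theorem bdom_add_two_pow_iff_s16 (ha : a < 2 ^ n) (hb : b < 2 ^ n) :
    bdom (a + 2 ^ n) (b + 2 ^ n) ↔ bdom a b := by
  simp only [bdom, Nat.testBit_add_two_pow_of_lt ha, Nat.testBit_add_two_pow_of_lt hb,
    Bool.or_eq_true, decide_eq_true_eq]
  refine ⟨fun h t hat => ?_, fun h t => Or.imp_right (h t)⟩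
  exact (h t (Or.inr hat)).resolve_left (Nat.ne_of_testBit_of_lt_two_pow ha hat)

theorem bdom_add_two_pow_right_iff_s16 (ha : a < 2 ^ n) (hb : b < 2 ^ n) :
    bdom a (b + 2 ^ n) ↔ bdom a b := by
  simp only [bdom, Nat.testBit_add_two_pow_of_lt hb, Bool.or_eq_true, decide_eq_true_eq]
  refine ⟨fun h t hat => ?_, fun h t hat => Or.inr (h t hat)⟩
  exact (h t hat).resolve_left (Nat.ne_of_testBit_of_lt_two_pow ha hat)

end bdom

theorem enc_eq_sum (n : ℕ) (u : ℕ → ZMod 2) {j : ℕ} (hj : j < 2 ^ n) :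
    enc n u j = ∑ k ∈ (Finset.range (2 ^ n)).filter (bdom j), u k := by
  induction n generalizing u j with
  | zero =>
    obtain rfl : j = 0 := by simpa using hj
    simp [enc, Finset.filter_singleton, bdom]
  | succ n ih =>
    rw [Finset.sum_filter, pow_succ, mul_two, Finset.sum_range_add]
    simp only [enc]
    split_ifs with hlow
    · rw [ih _ hlow, Finset.sum_filter, ← Finset.sum_add_distrib]
      refine Finset.sum_congr rfl fun k hk => ?_
      rw [add_comm (2 ^ n) k]
      simp only [bdom_add_two_pow_right_iff_s16 hlow (Finset.mem_range.mp hk)]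
      split_ifs <;> simp
    · obtain ⟨j, rfl⟩ : ∃ j', j = j' + 2 ^ n := ⟨j - 2 ^ n, by omega⟩
      have hj' : j < 2 ^ n := by omega
      have hlow_zero : ∑ k ∈ Finset.range (2 ^ n), (if bdom (j + 2 ^ n) k then u k else 0) = 0 :=
        Finset.sum_eq_zero fun k hk => if_neg fun h =>
          (Finset.mem_range.mp hk).not_ge (le_trans (Nat.le_add_left _ _) h.le)
      rw [hlow_zero, zero_add, Nat.add_sub_cancel, ih _ hj', Finset.sum_filter]
      refine Finset.sum_congr rfl fun k hk => ?_
      rw [add_comm (2 ^ n) k]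
      simp only [bdom_add_two_pow_iff_s16 hj' (Finset.mem_range.mp hk)]

theorem mem_Xs_iff {n : ℕ} {U : Set ℕ} {j : ℕ} :
    j ∈ Xs n U ↔ j < 2 ^ n ∧ ∀ k < 2 ^ n, bdom j k → k ∈ U := by
  refine ⟨fun ⟨hj, hfix⟩ => ⟨hj, fun k hk hjk => ?_⟩, fun ⟨hj, hup⟩ => ⟨hj, fun u hu => ?_⟩⟩
  · by_contra hkU
    have hsingle := hfix (Pi.single k 1) fun i hi =>
      Pi.single_eq_of_ne (ne_of_mem_of_not_mem hi hkU) _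
    simp [enc_eq_sum n _ hj, hk, hjk] at hsingle
  · rw [enc_eq_sum n u hj]
    exact Finset.sum_eq_zero fun k hk => by
      rw [Finset.mem_filter, Finset.mem_range] at hk
      exact hu k (hup k hk.1 hk.2)

theorem fixed_upward_closed_general (n : ℕ) (U : Set ℕ)
    (j : ℕ) (hj : j ∈ Xs n U) (k : ℕ) (hk : k < 2 ^ n) (hjk : bdom j k) :
    k ∈ Xs n U := by
  rw [mem_Xs_iff] at hj ⊢
  exact ⟨hk, fun m hm hkm => hj.2 m hm (bdom_trans hjk hkm)⟩

/-- the fixed bit pattern is upward closed under binary domination. -/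
theorem fixed_upward_closed (n : ℕ) (U : Set ℕ) (hU : ∀ i ∈ U, i < 2 ^ n)
    (j : ℕ) (hj : j ∈ Xs n U) (k : ℕ) (hk : k < 2 ^ n) (hjk : bdom j k) :
    k ∈ Xs n U :=
  fixed_upward_closed_general n U j hj k hk hjk
end

section
/- For every n ≥ 0, every input vector u : {0,…,2^n−1} → GF(2), and every j < 2^n, the j-th encoder output bit equals the GF(2)-sum of the input bits whose indices dominate j: enc_n(u)_j = Σ_{i < 2^n, j ⪯ i} u_i. Equivalently, the (i, j) entry of F₂^{⊗n} over GF(2) is 1 if j ⪯ i and 0 otherwise. -/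
/-! Split indices by their top bit `n`. For `j < 2 ^ n`, an index `i` and its partner `i + 2 ^ n` in
the high half dominate `j` together or not at all, so the dominating sum over `2 ^ (n + 1)` indices is
the dominating sum of `u_L + u_H`. For `j = 2 ^ n + k`, no index of the low half dominates `j`, and
`i + 2 ^ n` dominates `j` exactly when `i` dominates `k`; this matches the two branches of `enc`. -/

open Finset

namespace Nat

theorem testBit_two_pow_add_of_lt {n x : ℕ} (hx : x < 2 ^ n) (t : ℕ) :
    (2 ^ n + x).testBit t = (decide (t = n) || x.testBit t) := by
  rcases lt_trichotomy t n with ht | rfl | ht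
  · simp [testBit_two_pow_add_gt ht, ht.ne]
  · simp [testBit_two_pow_add_eq, testBit_lt_two_pow hx]
  · have hsum : 2 ^ n + x < 2 ^ t :=
      (two_pow_succ n ▸ Nat.add_lt_add_left hx _).trans_le (pow_le_pow_right₀ one_le_two ht)
    simp [testBit_lt_two_pow hsum, testBit_lt_two_pow (hx.trans (pow_lt_pow_right₀ one_lt_two ht)),
      ht.ne']

end Nat

theorem bdom_zero_left (i : ℕ) : bdom 0 i := by
  simp [bdom]

section bdom

variable {n i j : ℕ}

theorem bdom_two_pow_add_right_iff (hj : j < 2 ^ n) (hi : i < 2 ^ n) :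
    bdom j (2 ^ n + i) ↔ bdom j i := by
  refine forall_congr' fun t => imp_congr_right fun hjt => ?_
  have htn : t ≠ n := by rintro rfl; simp [Nat.testBit_lt_two_pow hj] at hjt
  simp [Nat.testBit_two_pow_add_of_lt hi, htn]

theorem bdom_two_pow_add_iff (hj : j < 2 ^ n) (hi : i < 2 ^ n) :
    bdom (2 ^ n + j) (2 ^ n + i) ↔ bdom j i := by
  refine forall_congr' fun t => ?_
  simp only [Nat.testBit_two_pow_add_of_lt hj, Nat.testBit_two_pow_add_of_lt hi]
  by_cases htn : t = n
  · simp [htn, Nat.testBit_lt_two_pow hj]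
  · simp [htn]

theorem not_bdom_two_pow_add_left (hj : j < 2 ^ n) (hi : i < 2 ^ n) : ¬ bdom (2 ^ n + j) i := by
  intro h
  simpa [Nat.testBit_lt_two_pow hi] using h n (by simp [Nat.testBit_two_pow_add_of_lt hj])

end bdom

section sum

variable {M : Type*} [AddCommMonoid M] {n j : ℕ} (u : ℕ → M)

theorem sum_filter_bdom_range_two_pow_succ (hj : j < 2 ^ n) :
    ∑ i ∈ (range (2 ^ (n + 1))).filter (bdom j), u i
      = ∑ i ∈ (range (2 ^ n)).filter (bdom j), (u i + u (i + 2 ^ n)) := by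
  rw [sum_filter, sum_filter, Nat.two_pow_succ, sum_range_add, ← sum_add_distrib]
  refine sum_congr rfl fun i hi => ?_
  simp only [bdom_two_pow_add_right_iff hj (mem_range.mp hi)]
  rw [Nat.add_comm (2 ^ n) i]
  split_ifs <;> simp

theorem sum_filter_bdom_two_pow_add_range_two_pow_succ (hj : j < 2 ^ n) :
    ∑ i ∈ (range (2 ^ (n + 1))).filter (bdom (2 ^ n + j)), u i
      = ∑ i ∈ (range (2 ^ n)).filter (bdom j), u (i + 2 ^ n) := by
  rw [sum_filter, sum_filter, Nat.two_pow_succ, sum_range_add, sum_eq_zero, zero_add]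
  · refine sum_congr rfl fun i hi => ?_
    simp only [bdom_two_pow_add_iff hj (mem_range.mp hi)]
    rw [Nat.add_comm (2 ^ n) i]
  · intro i hi
    rw [if_neg (not_bdom_two_pow_add_left hj (mem_range.mp hi))]

end sum

theorem enc_succ_of_lt {n j : ℕ} (u : ℕ → ZMod 2) (hj : j < 2 ^ n) :
    enc (n + 1) u j = enc n (fun i => u i + u (i + 2 ^ n)) j := by
  simp [enc, hj]

theorem enc_succ_two_pow_add (n j : ℕ) (u : ℕ → ZMod 2) :
    enc (n + 1) u (2 ^ n + j) = enc n (fun i => u (i + 2 ^ n)) j := by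
  simp [enc]

/-- the `j`-th encoder output bit is the GF(2)-sum of the input bits
whose indices dominate `j`; i.e. the `(i,j)` entry of `F₂^{⊗n}` is 1 iff `j ⪯ i`. -/
theorem enc_eq_sum_dominating (n : ℕ) (u : ℕ → ZMod 2) (j : ℕ) (hj : j < 2 ^ n) :
    enc n u j = ∑ i ∈ (Finset.range (2 ^ n)).filter (fun i => bdom j i), u i := by
  induction n generalizing u j with
  | zero =>
    obtain rfl : j = 0 := by simpa using hj
    simp [enc, bdom_zero_left]
  | succ n ih =>
    rcases lt_or_ge j (2 ^ n) with hj | hj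
    · rw [enc_succ_of_lt u hj, ih _ _ hj, sum_filter_bdom_range_two_pow_succ u hj]
    · obtain ⟨k, rfl⟩ := Nat.exists_eq_add_of_le hj
      have hk : k < 2 ^ n := by rw [Nat.two_pow_succ] at *; omega
      rw [enc_succ_two_pow_add, ih _ _ hk, sum_filter_bdom_two_pow_add_range_two_pow_succ u hk]
end
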